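/- Let Φ be a Young function satisfying the Δ₂ condition and u ∈ L^Φ(ℝ^N). Then limsup_{t→0⁺} Φ(t)·|E_t|_{2N} ≤ 2ω_N ∫_{ℝ^N} Φ(|u(x)|) dx, where E_t = {(x,y) : x ≠ y, Φ(|u(x)-u(y)|) ≥ Φ(t)|x-y|^N}. -/

import Mathlib

/-!
Fix `δ > 0`. A pair `(x, y)` with `Φ(t) |x - y|^N ≤ Φ(|u x - u y|)` satisfies
`|u x - u y| ≤ (1 + δ) |u x|`, or `|u x - u y| ≤ (1 + δ) |u y|`, or else `δ |u x| ≤ |u y|` and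
`|u x - u y| ≤ (1 + δ⁻¹) |u x|`. In the first case `y` lies in a ball around `x` of volume
`ω_N Φ((1 + δ) |u x|) / Φ(t)`, so by Tonelli each of the first two pieces contributes exactly
`ω_N ∫ Φ((1 + δ) |u|)`. For fixed `x` the third piece lies in the superlevel set
`{|u| ≥ δ |u x|}`, of finite measure by Chebyshev, so its contribution tends to `0` by dominated
convergence, the Δ₂ condition making `Φ((1 + δ⁻¹) |u|)` integrable. Finally let `δ → 0`.
-/

open MeasureTheory Metric Set Filter Topology Module
open scoped ENNReal

lemma abs_sub_le_of_lt_abs_sub {a b δ : ℝ} (hδ : 0 < δ) (ha : (1 + δ) * |a| < |a - b|)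
    (hb : (1 + δ) * |b| < |a - b|) : δ * |a| ≤ |b| ∧ |a - b| ≤ (1 + δ⁻¹) * |a| := by
  have htri : |a - b| ≤ |a| + |b| := abs_sub _ _
  have hba : |b| ≤ δ⁻¹ * |a| := (le_inv_mul_iff₀ hδ).mpr (by linarith)
  constructor <;> nlinarith

section YoungFunction

variable {Φ : ℝ → ℝ}

lemma ConvexOn.monotoneOn_Ici_of_isMinOn (hconv : ConvexOn ℝ (Ici 0) Φ)
    (hmin : IsMinOn Φ (Ici 0) 0) : MonotoneOn Φ (Ici 0) := by
  intro s hs t ht hst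
  rcases (mem_Ici.mp hs).eq_or_lt with rfl | hs0
  · exact hmin ht
  rcases hst.eq_or_lt with rfl | hst
  · rfl
  refine hconv.le_right_of_left_le self_mem_Ici ht ?_ (hmin hs)
  rw [openSegment_eq_Ioo (hs0.trans hst)]
  exact ⟨hs0, hst⟩

lemma le_pow_mul_of_doubling {k : ℝ} (hk : 0 ≤ k) (hΔ : ∀ s > 0, Φ (2 * s) ≤ k * Φ s)
    (m : ℕ) {s : ℝ} (hs : 0 < s) : Φ (2 ^ m * s) ≤ k ^ m * Φ s := by
  induction m with
  | zero => simp
  | succ m ih =>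
    calc Φ (2 ^ (m + 1) * s) = Φ (2 * (2 ^ m * s)) := by ring_nf
      _ ≤ k * Φ (2 ^ m * s) := hΔ _ (by positivity)
      _ ≤ k * (k ^ m * Φ s) := mul_le_mul_of_nonneg_left ih hk
      _ = k ^ (m + 1) * Φ s := by ring

lemma ContinuousOn.measurable_comp_mul_abs {α : Type*} [MeasurableSpace α]
    (hΦc : ContinuousOn Φ (Ici 0)) {u : α → ℝ} (hu : Measurable u) {c : ℝ} (hc : 0 ≤ c) :
    Measurable fun x => Φ (c * |u x|) :=
  ((hΦc.comp_continuous (continuous_const.mul continuous_abs)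
    fun s => mul_nonneg hc (abs_nonneg s)).measurable).comp hu

variable {α : Type*} [MeasurableSpace α] {μ : Measure α} {u : α → ℝ}

lemma lintegral_ofReal_comp_mul_abs_ne_top (hΦ0 : Φ 0 = 0) (hmono : MonotoneOn Φ (Ici 0))
    {k : ℝ} (hk : 0 ≤ k) (hΔ : ∀ s > 0, Φ (2 * s) ≤ k * Φ s)
    (hu : Measurable fun x => Φ |u x|) (hfin : ∫⁻ x, ENNReal.ofReal (Φ |u x|) ∂μ ≠ ⊤)
    {c : ℝ} (hc : 0 ≤ c) : ∫⁻ x, ENNReal.ofReal (Φ (c * |u x|)) ∂μ ≠ ⊤ := by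
  obtain ⟨m, hm⟩ := pow_unbounded_of_one_lt c one_lt_two
  have hle : ∀ x, ENNReal.ofReal (Φ (c * |u x|)) ≤
      ENNReal.ofReal (k ^ m) * ENNReal.ofReal (Φ |u x|) := by
    intro x
    rw [← ENNReal.ofReal_mul (by positivity)]
    refine ENNReal.ofReal_le_ofReal ?_
    rcases (abs_nonneg (u x)).eq_or_lt with h | h
    · simp [← h, hΦ0]
    calc Φ (c * |u x|) ≤ Φ (2 ^ m * |u x|) :=
          hmono (mem_Ici.mpr (by positivity)) (mem_Ici.mpr (by positivity)) (by gcongr)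
      _ ≤ k ^ m * Φ |u x| := le_pow_mul_of_doubling hk hΔ m h
  refine ne_top_of_le_ne_top ?_ (lintegral_mono hle)
  rw [lintegral_const_mul _ hu.ennreal_ofReal]
  exact ENNReal.mul_ne_top ENNReal.ofReal_ne_top hfin

lemma measure_setOf_le_abs_ne_top (hmono : MonotoneOn Φ (Ici 0)) (hu : Measurable fun x => Φ |u x|)
    (hfin : ∫⁻ x, ENNReal.ofReal (Φ |u x|) ∂μ ≠ ⊤) {s : ℝ} (hs : 0 ≤ s) (hΦs : 0 < Φ s) :
    μ {x | s ≤ |u x|} ≠ ⊤ := by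
  have hsub : {x | s ≤ |u x|} ⊆ {x | ENNReal.ofReal (Φ s) ≤ ENNReal.ofReal (Φ |u x|)} :=
    fun x hx => ENNReal.ofReal_le_ofReal (hmono hs (hs.trans hx) hx)
  refine ne_top_of_le_ne_top ?_ (measure_mono hsub)
  refine ne_top_of_le_ne_top ?_ (meas_ge_le_lintegral_div hu.ennreal_ofReal.aemeasurable
    (by simpa using hΦs) ENNReal.ofReal_ne_top)
  exact ENNReal.div_ne_top hfin (by simpa using hΦs)

lemma tendsto_lintegral_ofReal_comp_one_add_mul_abs (hΦc : ContinuousOn Φ (Ici 0))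
    (hmono : MonotoneOn Φ (Ici 0)) (hu : Measurable u)
    (h2fin : ∫⁻ x, ENNReal.ofReal (Φ (2 * |u x|)) ∂μ ≠ ⊤) :
    Tendsto (fun δ => ∫⁻ x, ENNReal.ofReal (Φ ((1 + δ) * |u x|)) ∂μ) (𝓝[>] 0)
      (𝓝 (∫⁻ x, ENNReal.ofReal (Φ |u x|) ∂μ)) := by
  refine tendsto_lintegral_filter_of_dominated_convergence
    (fun x => ENNReal.ofReal (Φ (2 * |u x|))) ?_ ?_ h2fin (.of_forall fun x => ?_)
  · filter_upwards [self_mem_nhdsWithin] with δ (hδ : 0 < δ)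
    exact (hΦc.measurable_comp_mul_abs hu (by positivity)).ennreal_ofReal
  · filter_upwards [Ioc_mem_nhdsGT one_pos] with δ hδ
    refine .of_forall fun x => ENNReal.ofReal_le_ofReal ?_
    refine hmono (mem_Ici.mpr (mul_nonneg (by linarith [hδ.1]) (abs_nonneg _)))
      (mem_Ici.mpr (by positivity)) ?_
    gcongr
    linarith [hδ.2]
  · have harg : Tendsto (fun δ => (1 + δ) * |u x|) (𝓝[>] 0) (𝓝[Ici 0] |u x|) := by
      refine tendsto_nhdsWithin_iff.mpr ⟨?_, ?_⟩
      · have hcont : Continuous fun δ : ℝ => (1 + δ) * |u x| := by fun_prop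
        exact (hcont.tendsto' 0 _ (by simp)).mono_left nhdsWithin_le_nhds
      · filter_upwards [self_mem_nhdsWithin] with δ (hδ : 0 < δ)
        exact mem_Ici.mpr (by positivity)
    exact ENNReal.tendsto_ofReal ((hΦc _ (mem_Ici.mpr (abs_nonneg _))).tendsto.comp harg)

end YoungFunction

lemma tendsto_ofReal_mul_measure_far_section {E : Type*} [MetricSpace E] [MeasurableSpace E]
    (μ : Measure E) {Φ : ℝ → ℝ} (hΦc : ContinuousOn Φ (Ici 0)) (hΦ0 : Φ 0 = 0)
    (hpos : ∀ t > 0, 0 < Φ t) {u : E → ℝ} (hlev : ∀ s > 0, μ {y | s ≤ |u y|} ≠ ⊤) {c δ : ℝ}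
    {n : ℕ} (hδ : 0 < δ) (x : E) :
    Tendsto (fun t => ENNReal.ofReal (Φ t) * μ {y | x ≠ y ∧
        Φ t * dist x y ^ n ≤ Φ (c * |u x|) ∧ δ * |u x| ≤ |u y|}) (𝓝[>] 0) (𝓝 0) := by
  rcases eq_or_ne (u x) 0 with hux | hux
  · refine tendsto_const_nhds.congr' ?_
    filter_upwards [self_mem_nhdsWithin] with t (ht : 0 < t)
    have hempty : {y | x ≠ y ∧ Φ t * dist x y ^ n ≤ Φ (c * |u x|) ∧ δ * |u x| ≤ |u y|} = ∅ := by
      refine eq_empty_of_forall_notMem ?_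
      rintro y ⟨hxy, hle, -⟩
      rw [hux, abs_zero, mul_zero, hΦ0] at hle
      exact hle.not_gt (mul_pos (hpos t ht) (pow_pos (dist_pos.mpr hxy) n))
    rw [hempty, measure_empty, mul_zero]
  have hΦt : Tendsto (fun t => ENNReal.ofReal (Φ t)) (𝓝[>] 0) (𝓝 0) := by
    have := ENNReal.tendsto_ofReal (hΦ0 ▸ (hΦc 0 self_mem_Ici).tendsto)
    rw [ENNReal.ofReal_zero] at this
    exact this.mono_left (nhdsWithin_mono _ Ioi_subset_Ici_self)
  have hlim := ENNReal.Tendsto.mul_const hΦt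
    (.inr (hlev (δ * |u x|) (mul_pos hδ (abs_pos.mpr hux))))
  rw [zero_mul] at hlim
  refine tendsto_of_tendsto_of_tendsto_of_le_of_le tendsto_const_nhds hlim
    (fun _ => zero_le) fun t => ?_
  gcongr
  exact fun hy => hy.2.2

section HaarMeasure

variable {E : Type*} [NormedAddCommGroup E] [NormedSpace ℝ E] [FiniteDimensional ℝ E]
  [Nontrivial E] [MeasurableSpace E] [BorelSpace E] (μ : Measure E) [μ.IsAddHaarMeasure]

lemma ofReal_mul_addHaar_setOf_mul_dist_pow_le {c a : ℝ} (hc : 0 < c) (ha : 0 ≤ a) (x : E) :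
    ENNReal.ofReal c * μ {y | c * dist x y ^ finrank ℝ E ≤ a} =
      ENNReal.ofReal a * μ (ball 0 1) := by
  set n := finrank ℝ E
  have hn : n ≠ 0 := finrank_pos.ne'
  set r := (a / c) ^ (n⁻¹ : ℝ)
  have hr : 0 ≤ r := by positivity
  have hrn : r ^ n = a / c := by
    rw [← Real.rpow_natCast, ← Real.rpow_mul (by positivity), inv_mul_cancel₀ (by simpa),
      Real.rpow_one]
  have hball : {y | c * dist x y ^ n ≤ a} = closedBall x r := by
    ext y
    rw [mem_ofPred_eq, mem_closedBall, dist_comm, ← pow_le_pow_iff_left₀ dist_nonneg hr hn, hrn,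
      le_div_iff₀' hc]
  rw [hball, Measure.addHaar_closedBall μ x hr, hrn, ← mul_assoc, ← ENNReal.ofReal_mul hc.le,
    mul_div_cancel₀ a hc.ne']

lemma ofReal_mul_prod_setOf_mul_dist_pow_le_fst {c : ℝ} (hc : 0 < c) {a : E → ℝ}
    (ha : Measurable a) (ha0 : ∀ x, 0 ≤ a x) :
    ENNReal.ofReal c * (μ.prod μ) {p | c * dist p.1 p.2 ^ finrank ℝ E ≤ a p.1} =
      μ (ball 0 1) * ∫⁻ x, ENNReal.ofReal (a x) ∂μ := by
  have hS : MeasurableSet {p : E × E | c * dist p.1 p.2 ^ finrank ℝ E ≤ a p.1} :=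
    measurableSet_le (by fun_prop) (by fun_prop)
  rw [Measure.prod_apply hS, ← lintegral_const_mul _ (measurable_measure_prodMk_left hS),
    ← lintegral_const_mul _ ha.ennreal_ofReal]
  refine lintegral_congr fun x => ?_
  rw [mul_comm (μ _)]
  exact ofReal_mul_addHaar_setOf_mul_dist_pow_le μ hc (ha0 x) x

lemma ofReal_mul_prod_setOf_mul_dist_pow_le_snd {c : ℝ} (hc : 0 < c) {a : E → ℝ}
    (ha : Measurable a) (ha0 : ∀ x, 0 ≤ a x) :
    ENNReal.ofReal c * (μ.prod μ) {p | c * dist p.1 p.2 ^ finrank ℝ E ≤ a p.2} =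
      μ (ball 0 1) * ∫⁻ x, ENNReal.ofReal (a x) ∂μ := by
  have hswap : {p : E × E | c * dist p.1 p.2 ^ finrank ℝ E ≤ a p.2} =
      Prod.swap ⁻¹' {p | c * dist p.1 p.2 ^ finrank ℝ E ≤ a p.1} := by
    ext p
    simp [dist_comm p.1]
  rw [hswap, (Measure.measurePreserving_swap (μ := μ) (ν := μ)).measure_preimage
    (measurableSet_le (by fun_prop) (by fun_prop)).nullMeasurableSet]
  exact ofReal_mul_prod_setOf_mul_dist_pow_le_fst μ hc ha ha0

lemma tendsto_ofReal_mul_prod_far_set {Φ : ℝ → ℝ} (hΦc : ContinuousOn Φ (Ici 0))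
    (hΦ0 : Φ 0 = 0) (hpos : ∀ t > 0, 0 < Φ t) {u : E → ℝ} (hu : Measurable u)
    (hlev : ∀ s > 0, μ {y | s ≤ |u y|} ≠ ⊤) {c δ : ℝ} (hc : 0 ≤ c) (hδ : 0 < δ)
    (hcfin : ∫⁻ x, ENNReal.ofReal (Φ (c * |u x|)) ∂μ ≠ ⊤) :
    Tendsto (fun t => ENNReal.ofReal (Φ t) * (μ.prod μ) {p | p.1 ≠ p.2 ∧
        Φ t * dist p.1 p.2 ^ finrank ℝ E ≤ Φ (c * |u p.1|) ∧ δ * |u p.1| ≤ |u p.2|})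
      (𝓝[>] 0) (𝓝 0) := by
  set n := finrank ℝ E
  set S : ℝ → Set (E × E) := fun t => {p | p.1 ≠ p.2 ∧
    Φ t * dist p.1 p.2 ^ n ≤ Φ (c * |u p.1|) ∧ δ * |u p.1| ≤ |u p.2|}
  have hcm : Measurable fun x => Φ (c * |u x|) := hΦc.measurable_comp_mul_abs hu hc
  have hS : ∀ t, MeasurableSet (S t) := fun t =>
    measurableSet_diagonal.compl.inter <|
      (measurableSet_le (by fun_prop : Measurable fun p : E × E => Φ t * dist p.1 p.2 ^ n)
        (hcm.comp measurable_fst)).inter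
      (measurableSet_le (by fun_prop : Measurable fun p : E × E => δ * |u p.1|) (by fun_prop))
  have hsection : ∀ t, ENNReal.ofReal (Φ t) * (μ.prod μ) (S t) =
      ∫⁻ x, ENNReal.ofReal (Φ t) * μ (Prod.mk x ⁻¹' S t) ∂μ := fun t => by
    rw [Measure.prod_apply (hS t), lintegral_const_mul _ (measurable_measure_prodMk_left (hS t))]
  change Tendsto (fun t => ENNReal.ofReal (Φ t) * (μ.prod μ) (S t)) _ _
  rw [tendsto_congr hsection, ← lintegral_zero]
  refine tendsto_lintegral_filter_of_dominated_convergence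
    (fun x => ENNReal.ofReal (Φ (c * |u x|)) * μ (ball 0 1))
    (.of_forall fun t => (measurable_measure_prodMk_left (hS t)).const_mul _) ?_ ?_
    (.of_forall fun x => tendsto_ofReal_mul_measure_far_section μ hΦc hΦ0 hpos hlev hδ x)
  · filter_upwards [self_mem_nhdsWithin] with t (ht : 0 < t)
    refine .of_forall fun x => ?_
    have hcx : 0 ≤ Φ (c * |u x|) := by
      rcases (mul_nonneg hc (abs_nonneg (u x))).eq_or_lt with h | h
      exacts [h ▸ hΦ0.ge, (hpos _ h).le]
    calc ENNReal.ofReal (Φ t) * μ (Prod.mk x ⁻¹' S t)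
        ≤ ENNReal.ofReal (Φ t) * μ {y | Φ t * dist x y ^ n ≤ Φ (c * |u x|)} := by
          gcongr
          exact fun y hy => hy.2.1
      _ = _ := ofReal_mul_addHaar_setOf_mul_dist_pow_le μ (hpos t ht) hcx x
  · rw [lintegral_mul_const _ hcm.ennreal_ofReal]
    exact ENNReal.mul_ne_top hcfin measure_ball_lt_top.ne

lemma limsup_ofReal_mul_prod_le {Φ : ℝ → ℝ} (hΦc : ContinuousOn Φ (Ici 0)) (hΦ0 : Φ 0 = 0)
    (hmono : MonotoneOn Φ (Ici 0)) (hpos : ∀ t > 0, 0 < Φ t) {u : E → ℝ} (hu : Measurable u)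
    (hlev : ∀ s > 0, μ {y | s ≤ |u y|} ≠ ⊤)
    (hint : ∀ c ≥ 0, ∫⁻ x, ENNReal.ofReal (Φ (c * |u x|)) ∂μ ≠ ⊤) {δ : ℝ} (hδ : 0 < δ) :
    limsup (fun t => ENNReal.ofReal (Φ t) * (μ.prod μ)
        {p | p.1 ≠ p.2 ∧ Φ t * dist p.1 p.2 ^ finrank ℝ E ≤ Φ |u p.1 - u p.2|}) (𝓝[>] 0) ≤
      2 * μ (ball 0 1) * ∫⁻ x, ENNReal.ofReal (Φ ((1 + δ) * |u x|)) ∂μ := by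
  set n := finrank ℝ E
  set ω := μ (ball (0 : E) 1)
  set J := ∫⁻ x, ENNReal.ofReal (Φ ((1 + δ) * |u x|)) ∂μ
  set far : ℝ → ℝ≥0∞ := fun t => ENNReal.ofReal (Φ t) * (μ.prod μ) {p | p.1 ≠ p.2 ∧
    Φ t * dist p.1 p.2 ^ n ≤ Φ ((1 + δ⁻¹) * |u p.1|) ∧ δ * |u p.1| ≤ |u p.2|}
  have hJm : Measurable fun x => Φ ((1 + δ) * |u x|) :=
    hΦc.measurable_comp_mul_abs hu (by positivity)
  have hmono' : ∀ ⦃s s'⦄, 0 ≤ s → s ≤ s' → Φ s ≤ Φ s' := fun s s' hs h => hmono hs (hs.trans h) h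
  have hJnn : ∀ x, 0 ≤ Φ ((1 + δ) * |u x|) := fun x => hΦ0 ▸ hmono' le_rfl (by positivity)
  have hbound : ∀ t > 0, ENNReal.ofReal (Φ t) * (μ.prod μ)
      {p | p.1 ≠ p.2 ∧ Φ t * dist p.1 p.2 ^ n ≤ Φ |u p.1 - u p.2|} ≤ ω * J + ω * J + far t := by
    intro t ht
    have hsub : {p : E × E | p.1 ≠ p.2 ∧ Φ t * dist p.1 p.2 ^ n ≤ Φ |u p.1 - u p.2|} ⊆
        {p | Φ t * dist p.1 p.2 ^ n ≤ Φ ((1 + δ) * |u p.1|)} ∪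
          {p | Φ t * dist p.1 p.2 ^ n ≤ Φ ((1 + δ) * |u p.2|)} ∪
          {p | p.1 ≠ p.2 ∧ Φ t * dist p.1 p.2 ^ n ≤ Φ ((1 + δ⁻¹) * |u p.1|) ∧
            δ * |u p.1| ≤ |u p.2|} := by
      rintro p ⟨hne, hle⟩
      by_cases h₁ : |u p.1 - u p.2| ≤ (1 + δ) * |u p.1|
      · exact .inl (.inl (hle.trans (hmono' (abs_nonneg _) h₁)))
      by_cases h₂ : |u p.1 - u p.2| ≤ (1 + δ) * |u p.2|
      · exact .inl (.inr (hle.trans (hmono' (abs_nonneg _) h₂)))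
      obtain ⟨hfar, hdiff⟩ := abs_sub_le_of_lt_abs_sub hδ (not_le.mp h₁) (not_le.mp h₂)
      exact .inr ⟨hne, hle.trans (hmono' (abs_nonneg _) hdiff), hfar⟩
    calc _ ≤ ENNReal.ofReal (Φ t) *
          ((μ.prod μ) {p | Φ t * dist p.1 p.2 ^ n ≤ Φ ((1 + δ) * |u p.1|)} +
            (μ.prod μ) {p | Φ t * dist p.1 p.2 ^ n ≤ Φ ((1 + δ) * |u p.2|)} +
            (μ.prod μ) {p | p.1 ≠ p.2 ∧ Φ t * dist p.1 p.2 ^ n ≤ Φ ((1 + δ⁻¹) * |u p.1|) ∧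
              δ * |u p.1| ≤ |u p.2|}) := by
          gcongr
          exact (measure_mono hsub).trans <|
            (measure_union_le _ _).trans (add_le_add_left (measure_union_le _ _) _)
      _ = ω * J + ω * J + far t := by
          rw [mul_add, mul_add, ofReal_mul_prod_setOf_mul_dist_pow_le_fst μ (hpos t ht) hJm hJnn,
            ofReal_mul_prod_setOf_mul_dist_pow_le_snd μ (hpos t ht) hJm hJnn]
  have hfar : Tendsto far (𝓝[>] 0) (𝓝 0) :=
    tendsto_ofReal_mul_prod_far_set μ hΦc hΦ0 hpos hu hlev (by positivity) hδ
      (hint _ (by positivity))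
  calc _ ≤ limsup (fun t => ω * J + ω * J + far t) (𝓝[>] 0) :=
        limsup_le_limsup (eventually_nhdsWithin_of_forall hbound)
    _ = ω * J + ω * J + 0 := (tendsto_const_nhds.add hfar).limsup_eq
    _ = 2 * ω * J := by ring

theorem limsup_ofReal_mul_prod_le_two_mul {Φ : ℝ → ℝ} (hΦc : ContinuousOn Φ (Ici 0))
    (hΦ0 : Φ 0 = 0) (hmono : MonotoneOn Φ (Ici 0)) {k : ℝ} (hk : 0 ≤ k)
    (hΔ : ∀ s > 0, Φ (2 * s) ≤ k * Φ s) {u : E → ℝ} (hu : Measurable u)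
    (hfin : ∫⁻ x, ENNReal.ofReal (Φ |u x|) ∂μ ≠ ⊤) :
    limsup (fun t => ENNReal.ofReal (Φ t) * (μ.prod μ)
        {p | p.1 ≠ p.2 ∧ Φ t * dist p.1 p.2 ^ finrank ℝ E ≤ Φ |u p.1 - u p.2|}) (𝓝[>] 0) ≤
      2 * μ (ball 0 1) * ∫⁻ x, ENNReal.ofReal (Φ |u x|) ∂μ := by
  by_cases hpos : ∀ t > 0, 0 < Φ t
  · have hum : Measurable fun x => Φ |u x| := by
      simpa using hΦc.measurable_comp_mul_abs hu zero_le_one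
    have hint : ∀ c ≥ 0, ∫⁻ x, ENNReal.ofReal (Φ (c * |u x|)) ∂μ ≠ ⊤ := fun c hc =>
      lintegral_ofReal_comp_mul_abs_ne_top hΦ0 hmono hk hΔ hum hfin hc
    have hlev : ∀ s > 0, μ {y | s ≤ |u y|} ≠ ⊤ := fun s hs =>
      measure_setOf_le_abs_ne_top hmono hum hfin hs.le (hpos s hs)
    refine ge_of_tendsto (ENNReal.Tendsto.const_mul (tendsto_lintegral_ofReal_comp_one_add_mul_abs
      hΦc hmono hu (hint 2 zero_le_two)) (.inr (by finiteness)))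
      (eventually_nhdsWithin_of_forall fun δ hδ => ?_)
    exact limsup_ofReal_mul_prod_le μ hΦc hΦ0 hmono hpos hu hlev hint hδ
  · obtain ⟨a, ha, hΦa⟩ : ∃ a > 0, Φ a ≤ 0 := by simpa using hpos
    have hzero : ∀ᶠ t in 𝓝[>] (0 : ℝ), ENNReal.ofReal (Φ t) * (μ.prod μ)
        {p | p.1 ≠ p.2 ∧ Φ t * dist p.1 p.2 ^ finrank ℝ E ≤ Φ |u p.1 - u p.2|} = 0 := by
      filter_upwards [Ioc_mem_nhdsGT ha] with t ht
      rw [ENNReal.ofReal_eq_zero.mpr ((hmono (mem_Ici.mpr ht.1.le) (mem_Ici.mpr ha.le) ht.2).trans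
        hΦa), zero_mul]
    rw [limsup_congr hzero, limsup_const]
    exact zero_le

end HaarMeasure

theorem stmt11 (N : ℕ) (hN : 0 < N) (Φ : ℝ → ℝ)
    (hΦc : ContinuousOn Φ (Ici 0)) (hΦconv : ConvexOn ℝ (Ici 0) Φ)
    (hΦ0 : Φ 0 = 0) (hΦnn : ∀ s, 0 ≤ s → 0 ≤ Φ s)
    (hΔ2 : ∃ k > 0, ∀ s > (0:ℝ), Φ (2 * s) ≤ k * Φ s)
    (u : EuclideanSpace ℝ (Fin N) → ℝ) (hu : Measurable u)
    (hfin : ∫⁻ x, ENNReal.ofReal (Φ (|u x|)) < ⊤) :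
    Filter.limsup (fun t : ℝ => ENNReal.ofReal (Φ t) *
        volume {p : EuclideanSpace ℝ (Fin N) × EuclideanSpace ℝ (Fin N) |
          p.1 ≠ p.2 ∧ Φ t * dist p.1 p.2 ^ N ≤ Φ (|u p.1 - u p.2|)})
        (nhdsWithin 0 (Ioi 0)) ≤
      2 * volume (ball (0 : EuclideanSpace ℝ (Fin N)) 1) *
        (∫⁻ x, ENNReal.ofReal (Φ (|u x|))) := by
  obtain ⟨k, hk, hΔ⟩ := hΔ2
  have hmono : MonotoneOn Φ (Ici 0) :=
    hΦconv.monotoneOn_Ici_of_isMinOn fun s hs => hΦ0.trans_le (hΦnn s hs)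
  have : Nontrivial (EuclideanSpace ℝ (Fin N)) := (finrank_pos_iff (R := ℝ)).mp (by simpa using hN)
  simpa [finrank_euclideanSpace_fin, Measure.volume_eq_prod] using
    limsup_ofReal_mul_prod_le_two_mul volume hΦc hΦ0 hmono hk.le hΔ hu hfin.ne
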